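/- arXiv:1710.02706 — 3 statements merged into one kernel-verified Lean document; each statement's English description precedes it below -/
import Mathlib

section
/- If (A, [·,·], {·,·,·}, α) is a Hom-Bol superalgebra with [x,y]=0 for all homogeneous x,y, then (A, {·,·,·}, α²) is a Hom-Lie supertriple system. -/
namespace SuperAlg

/-- The sign `(-1)^{ab}` for degrees `a b : ZMod 2`. -/
def sgn (k : Type*) [Field k] (a b : ZMod 2) : k := (-1 : k) ^ (a.val * b.val)

variable (k A : Type*) [Field k] [AddCommGroup A] [Module k A]

/-- Iterated composition of a linear self-map. -/
def lpow (f : A →ₗ[k] A) : ℕ → (A →ₗ[k] A)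
  | 0 => LinearMap.id
  | (n + 1) => f.comp (lpow f n)

/-- A (multiplicative) Hom-Bol superalgebra (axioms (SHB1)-(SHB7)). -/
structure HomBolSuper where
  grading : ZMod 2 → Submodule k A
  internal : DirectSum.IsInternal grading
  br : A →ₗ[k] A →ₗ[k] A
  tp : A →ₗ[k] A →ₗ[k] A →ₗ[k] A
  α : A →ₗ[k] A
  br_grade : ∀ (a b : ZMod 2) (x y : A), x ∈ grading a → y ∈ grading b →
    br x y ∈ grading (a + b)
  tp_grade : ∀ (a b c : ZMod 2) (x y z : A), x ∈ grading a → y ∈ grading b → z ∈ grading c →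
    tp x y z ∈ grading (a + b + c)
  α_even : ∀ (a : ZMod 2) (x : A), x ∈ grading a → α x ∈ grading a
  shb1 : ∀ x y : A, α (br x y) = br (α x) (α y)
  shb2 : ∀ x y z : A, α (tp x y z) = tp (α x) (α y) (α z)
  shb3 : ∀ (a b : ZMod 2) (x y : A), x ∈ grading a → y ∈ grading b →
    br x y = - sgn k a b • br y x
  shb4 : ∀ (a b : ZMod 2) (x y z : A), x ∈ grading a → y ∈ grading b →
    tp x y z = - sgn k a b • tp y x z
  shb5 : ∀ (a b c : ZMod 2) (x y z : A), x ∈ grading a → y ∈ grading b → z ∈ grading c →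
    tp x y z + sgn k a (b + c) • tp y z x + sgn k c (a + b) • tp z x y = 0
  shb6 : ∀ (a b c d : ZMod 2) (x y u v : A), x ∈ grading a → y ∈ grading b →
      u ∈ grading c → v ∈ grading d →
    tp (α x) (α y) (br u v) = br (tp x y u) (α (α v))
      + sgn k c (a + b) • br (α (α u)) (tp x y v)
      + sgn k (a + b) (c + d) •
          (tp (α u) (α v) (br x y) - br (br (α u) (α v)) (br (α x) (α y)))
  shb7 : ∀ (a b c d : ZMod 2) (x y u v w : A), x ∈ grading a → y ∈ grading b →
      u ∈ grading c → v ∈ grading d →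
    tp (α (α x)) (α (α y)) (tp u v w) = tp (tp x y u) (α (α v)) (α (α w))
      + sgn k c (a + b) • tp (α (α u)) (tp x y v) (α (α w))
      + sgn k (a + b) (c + d) • tp (α (α u)) (α (α v)) (tp x y w)

/-- A (multiplicative) Hom-Lie supertriple system with twisting map `β`. -/
structure HomLieSupertriple where
  grading : ZMod 2 → Submodule k A
  internal : DirectSum.IsInternal grading
  tp : A →ₗ[k] A →ₗ[k] A →ₗ[k] A
  β : A →ₗ[k] A
  tp_grade : ∀ (a b c : ZMod 2) (x y z : A), x ∈ grading a → y ∈ grading b → z ∈ grading c →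
    tp x y z ∈ grading (a + b + c)
  β_even : ∀ (a : ZMod 2) (x : A), x ∈ grading a → β x ∈ grading a
  β_mul : ∀ x y z : A, β (tp x y z) = tp (β x) (β y) (β z)
  anti : ∀ (a b : ZMod 2) (x y z : A), x ∈ grading a → y ∈ grading b →
    tp x y z = - sgn k a b • tp y x z
  cyclic : ∀ (a b c : ZMod 2) (x y z : A), x ∈ grading a → y ∈ grading b → z ∈ grading c →
    tp x y z + sgn k a (b + c) • tp y z x + sgn k c (a + b) • tp z x y = 0
  deriv : ∀ (a b c d : ZMod 2) (x y u v w : A), x ∈ grading a → y ∈ grading b →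
      u ∈ grading c → v ∈ grading d →
    tp (β x) (β y) (tp u v w) = tp (tp x y u) (β v) (β w)
      + sgn k c (a + b) • tp (β u) (tp x y v) (β w)
      + sgn k (a + b) (c + d) • tp (β u) (β v) (tp x y w)

/-- A Hom-Bol superalgebra with zero bracket gives a Hom-Lie supertriple system
with twisting map `α²`. -/
theorem homBolSuper_zero_bracket (H : HomBolSuper k A)
    (h : ∀ (a b : ZMod 2) (x y : A), x ∈ H.grading a → y ∈ H.grading b → H.br x y = 0) :
    ∃ L : HomLieSupertriple k A, L.grading = H.grading ∧ L.tp = H.tp ∧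
      L.β = H.α.comp H.α := by
  refine ⟨{ grading := H.grading
            internal := H.internal
            tp := H.tp
            β := H.α.comp H.α
            tp_grade := H.tp_grade
            β_even := fun a x hx => H.α_even a _ (H.α_even a x hx)
            β_mul := fun x y z => by
              simp only [LinearMap.comp_apply, H.shb2]
            anti := H.shb4
            cyclic := H.shb5
            deriv := fun a b c d x y u v w hx hy hu hv => by
              simpa using H.shb7 a b c d x y u v w hx hy hu hv }, rfl, rfl, rfl⟩

end SuperAlg
end

section
/- Let (A, [·,·], {·,·,·}, α) be a Hom-Bol superalgebra and β: A → A an even self-morphism of the Hom-Bol superalgebra commuting with α. For any integer n ≥ 0 define [x,y]_{β^n} := β^n([x,y]) and {x,y,z}_{β^n} := β^{2n}({x,y,z}). Then (A, [·,·]_{β^n}, {·,·,·}_{β^n}, β^n ∘ α) is a Hom-Bol superalgebra. -/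
namespace SuperAlg

variable (k A : Type*) [Field k] [AddCommGroup A] [Module k A]

lemma lpow_succ_apply (f : A →ₗ[k] A) (m : ℕ) (x : A) :
    lpow k A f (m + 1) x = f (lpow k A f m x) := rfl

lemma lpow_add_apply (f : A →ₗ[k] A) (m m' : ℕ) (x : A) :
    lpow k A f (m + m') x = lpow k A f m (lpow k A f m' x) := by
  induction m with
  | zero => simp [lpow]
  | succ p ih =>
      have : p + 1 + m' = (p + m') + 1 := by omega
      rw [this, lpow_succ_apply, ih, lpow_succ_apply]

lemma lpow_grade (S : ZMod 2 → Submodule k A) (f : A →ₗ[k] A)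
    (hf : ∀ (a : ZMod 2) (x : A), x ∈ S a → f x ∈ S a) (m : ℕ) :
    ∀ (a : ZMod 2) (x : A), x ∈ S a → lpow k A f m x ∈ S a := by
  induction m with
  | zero => intro a x hx; simpa [lpow] using hx
  | succ p ih => intro a x hx; exact hf a _ (ih a x hx)

lemma lpow_br (br : A →ₗ[k] A →ₗ[k] A) (f : A →ₗ[k] A)
    (hf : ∀ x y : A, f (br x y) = br (f x) (f y)) (m : ℕ) :
    ∀ x y : A, lpow k A f m (br x y) = br (lpow k A f m x) (lpow k A f m y) := by
  induction m with
  | zero => intro x y; simp [lpow]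
  | succ p ih => intro x y; rw [lpow_succ_apply, ih, hf, lpow_succ_apply, lpow_succ_apply]

lemma lpow_tp (tp : A →ₗ[k] A →ₗ[k] A →ₗ[k] A) (f : A →ₗ[k] A)
    (hf : ∀ x y z : A, f (tp x y z) = tp (f x) (f y) (f z)) (m : ℕ) :
    ∀ x y z : A, lpow k A f m (tp x y z)
      = tp (lpow k A f m x) (lpow k A f m y) (lpow k A f m z) := by
  induction m with
  | zero => intro x y z; simp [lpow]
  | succ p ih =>
      intro x y z
      rw [lpow_succ_apply, ih, hf, lpow_succ_apply, lpow_succ_apply, lpow_succ_apply]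

lemma lpow_comm (g f : A →ₗ[k] A) (h : ∀ x, f (g x) = g (f x)) (m : ℕ) :
    ∀ x : A, lpow k A f m (g x) = g (lpow k A f m x) := by
  induction m with
  | zero => intro x; simp [lpow]
  | succ p ih => intro x; rw [lpow_succ_apply, ih, h, lpow_succ_apply]

/-- Theorem 4.1: twisting a Hom-Bol superalgebra by powers of an even self-morphism `β`
commuting with `α` yields a Hom-Bol superalgebra. -/
theorem homBolSuper_twist_pow (H : HomBolSuper k A) (β : A →ₗ[k] A)
    (hβeven : ∀ (a : ZMod 2) (x : A), x ∈ H.grading a → β x ∈ H.grading a)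
    (hβbr : ∀ x y : A, β (H.br x y) = H.br (β x) (β y))
    (hβtp : ∀ x y z : A, β (H.tp x y z) = H.tp (β x) (β y) (β z))
    (hβα : β.comp H.α = H.α.comp β) (n : ℕ) :
    ∃ H' : HomBolSuper k A, H'.grading = H.grading ∧
      (∀ x y : A, H'.br x y = lpow k A β n (H.br x y)) ∧
      (∀ x y z : A, H'.tp x y z = lpow k A β (2 * n) (H.tp x y z)) ∧
      H'.α = (lpow k A β n).comp H.α := by
  have hαc : ∀ x, β (H.α x) = H.α (β x) := fun x => congrFun (congrArg DFunLike.coe hβα) x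
  -- key pointwise lemmas about B := lpow β n
  have hgr : ∀ (m : ℕ) (a : ZMod 2) (x : A), x ∈ H.grading a → lpow k A β m x ∈ H.grading a :=
    fun m => lpow_grade k A H.grading β hβeven m
  have hbr : ∀ (m : ℕ) (x y : A),
      lpow k A β m (H.br x y) = H.br (lpow k A β m x) (lpow k A β m y) :=
    fun m => lpow_br k A H.br β hβbr m
  have htp : ∀ (m : ℕ) (x y z : A), lpow k A β m (H.tp x y z)
      = H.tp (lpow k A β m x) (lpow k A β m y) (lpow k A β m z) :=
    fun m => lpow_tp k A H.tp β hβtp m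
  have hac : ∀ (m : ℕ) (x : A), lpow k A β m (H.α x) = H.α (lpow k A β m x) :=
    fun m => lpow_comm k A H.α β hαc m
  have h2 : ∀ x : A, lpow k A β (2 * n) x = lpow k A β n (lpow k A β n x) := by
    intro x; rw [two_mul, lpow_add_apply]
  refine ⟨{
    grading := H.grading
    internal := H.internal
    br := H.br.compr₂ (lpow k A β n)
    tp := H.tp.compr₂ (LinearMap.llcomp k A A A (lpow k A β (2 * n)))
    α := (lpow k A β n).comp H.α
    br_grade := ?_
    tp_grade := ?_
    α_even := ?_
    shb1 := ?_
    shb2 := ?_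
    shb3 := ?_
    shb4 := ?_
    shb5 := ?_
    shb6 := ?_
    shb7 := ?_ }, rfl, fun x y => rfl, fun x y z => rfl, rfl⟩
  · intro a b x y hx hy
    exact hgr n _ _ (H.br_grade a b x y hx hy)
  · intro a b c x y z hx hy hz
    exact hgr (2 * n) _ _ (H.tp_grade a b c x y z hx hy hz)
  · intro a x hx
    exact hgr n a _ (H.α_even a x hx)
  · intro x y
    simp only [LinearMap.compr₂_apply, LinearMap.comp_apply, hbr, hac, H.shb1]
  · intro x y z
    simp only [LinearMap.compr₂_apply, LinearMap.llcomp_apply, LinearMap.comp_apply,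
      h2, htp, hac, H.shb2]
  · intro a b x y hx hy
    simp only [LinearMap.compr₂_apply]
    rw [H.shb3 a b x y hx hy, map_smul]
  · intro a b x y z hx hy
    simp only [LinearMap.compr₂_apply, LinearMap.llcomp_apply, LinearMap.comp_apply]
    rw [H.shb4 a b x y z hx hy]
    simp
  · intro a b c x y z hx hy hz
    simp only [LinearMap.compr₂_apply, LinearMap.llcomp_apply, LinearMap.comp_apply]
    have h := congrArg (lpow k A β (2 * n)) (H.shb5 a b c x y z hx hy hz)
    simpa [map_add, map_smul] using h
  · intro a b c d x y u v hx hy hu hv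
    have h := H.shb6 a b c d (lpow k A β (3 * n) x) (lpow k A β (3 * n) y)
      (lpow k A β (3 * n) u) (lpow k A β (3 * n) v)
      (hgr _ _ _ hx) (hgr _ _ _ hy) (hgr _ _ _ hu) (hgr _ _ _ hv)
    have h3 : ∀ w : A, lpow k A β n (lpow k A β n (lpow k A β n w))
        = lpow k A β (3 * n) w := by
      intro w
      have : 3 * n = n + (n + n) := by omega
      rw [this, lpow_add_apply, lpow_add_apply]
    simp only [LinearMap.compr₂_apply, LinearMap.llcomp_apply, LinearMap.comp_apply,
      h2, hbr, hac, htp, map_add, map_smul, map_sub, H.shb1, H.shb2, h3]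
    exact h
  · intro a b c d x y u v w hx hy hu hv
    have h := H.shb7 a b c d (lpow k A β (4 * n) x) (lpow k A β (4 * n) y)
      (lpow k A β (4 * n) u) (lpow k A β (4 * n) v) (lpow k A β (4 * n) w)
      (hgr _ _ _ hx) (hgr _ _ _ hy) (hgr _ _ _ hu) (hgr _ _ _ hv)
    have h4 : ∀ z : A, lpow k A β n (lpow k A β n (lpow k A β n (lpow k A β n z)))
        = lpow k A β (4 * n) z := by
      intro z
      have : 4 * n = n + (n + (n + n)) := by omega
      rw [this, lpow_add_apply, lpow_add_apply, lpow_add_apply]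
    simp only [LinearMap.compr₂_apply, LinearMap.llcomp_apply, LinearMap.comp_apply,
      h2, hbr, hac, htp, map_add, map_smul, map_sub, H.shb1, H.shb2, h4]
    exact h

end SuperAlg
end

section
/- Let (A, [·,·], {·,·,·}) be a Bol superalgebra and β an even self-morphism of it. Define [x,y]_β := β([x,y]) and {x,y,z}_β := β²({x,y,z}). Then (A, [·,·]_β, {·,·,·}_β, β) is a Hom-Bol superalgebra. -/
namespace SuperAlg

variable (k A : Type*) [Field k] [AddCommGroup A] [Module k A]

/-- A Bol superalgebra (axioms (SB1)-(SB5)). -/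
structure BolSuper where
  grading : ZMod 2 → Submodule k A
  internal : DirectSum.IsInternal grading
  br : A →ₗ[k] A →ₗ[k] A
  tp : A →ₗ[k] A →ₗ[k] A →ₗ[k] A
  br_grade : ∀ (a b : ZMod 2) (x y : A), x ∈ grading a → y ∈ grading b →
    br x y ∈ grading (a + b)
  tp_grade : ∀ (a b c : ZMod 2) (x y z : A), x ∈ grading a → y ∈ grading b → z ∈ grading c →
    tp x y z ∈ grading (a + b + c)
  sb1 : ∀ (a b : ZMod 2) (x y : A), x ∈ grading a → y ∈ grading b →
    br x y = - sgn k a b • br y x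
  sb2 : ∀ (a b : ZMod 2) (x y z : A), x ∈ grading a → y ∈ grading b →
    tp x y z = - sgn k a b • tp y x z
  sb3 : ∀ (a b c : ZMod 2) (x y z : A), x ∈ grading a → y ∈ grading b → z ∈ grading c →
    tp x y z + sgn k a (b + c) • tp y z x + sgn k c (a + b) • tp z x y = 0
  sb4 : ∀ (a b c d : ZMod 2) (x y u v : A), x ∈ grading a → y ∈ grading b →
      u ∈ grading c → v ∈ grading d →
    tp x y (br u v) = br (tp x y u) v + sgn k c (a + b) • br u (tp x y v)
      + sgn k (a + b) (c + d) • (tp u v (br x y) - br (br u v) (br x y))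
  sb5 : ∀ (a b c d : ZMod 2) (x y u v w : A), x ∈ grading a → y ∈ grading b →
      u ∈ grading c → v ∈ grading d →
    tp x y (tp u v w) = tp (tp x y u) v w + sgn k c (a + b) • tp u (tp x y v) w
      + sgn k (a + b) (c + d) • tp u v (tp x y w)

/-- Corollary 4.1 (first part): Yau twisting of a Bol superalgebra along an even
self-morphism `β` gives a Hom-Bol superalgebra. -/
theorem bolSuper_yau_twist (B : BolSuper k A) (β : A →ₗ[k] A)
    (hβeven : ∀ (a : ZMod 2) (x : A), x ∈ B.grading a → β x ∈ B.grading a)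
    (hβbr : ∀ x y : A, β (B.br x y) = B.br (β x) (β y))
    (hβtp : ∀ x y z : A, β (B.tp x y z) = B.tp (β x) (β y) (β z)) :
    ∃ H : HomBolSuper k A, H.grading = B.grading ∧ H.α = β ∧
      (∀ x y : A, H.br x y = β (B.br x y)) ∧
      (∀ x y z : A, H.tp x y z = β (β (B.tp x y z))) := by
  classical
  -- twisted bracket: x y ↦ β (B.br x y)
  set br' : A →ₗ[k] A →ₗ[k] A := B.br.compr₂ β with hbr'
  -- twisted triple product: x y z ↦ β (β (B.tp x y z))
  set tp' : A →ₗ[k] A →ₗ[k] A →ₗ[k] A :=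
    { toFun := fun x => (B.tp x).compr₂ (β ∘ₗ β)
      map_add' := by intro x y; ext u v; simp
      map_smul' := by intro c x; ext u v; simp } with htp'
  have hbr'app : ∀ x y : A, br' x y = β (B.br x y) := by
    intro x y; simp [hbr']
  have htp'app : ∀ x y z : A, tp' x y z = β (β (B.tp x y z)) := by
    intro x y z; simp [htp']
  refine ⟨{ grading := B.grading
            internal := B.internal
            br := br'
            tp := tp'
            α := β
            br_grade := ?_
            tp_grade := ?_
            α_even := hβeven
            shb1 := ?_
            shb2 := ?_
            shb3 := ?_
            shb4 := ?_
            shb5 := ?_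
            shb6 := ?_
            shb7 := ?_ }, rfl, rfl, hbr'app, htp'app⟩
  · intro a b x y hx hy
    rw [hbr'app]
    exact hβeven _ _ (B.br_grade a b x y hx hy)
  · intro a b c x y z hx hy hz
    rw [htp'app]
    exact hβeven _ _ (hβeven _ _ (B.tp_grade a b c x y z hx hy hz))
  · intro x y
    rw [hbr'app, hbr'app, hβbr]
  · intro x y z
    rw [htp'app, htp'app, hβtp, hβtp]
  · intro a b x y hx hy
    rw [hbr'app, hbr'app, B.sb1 a b x y hx hy, map_smul]
  · intro a b x y z hx hy
    rw [htp'app, htp'app, B.sb2 a b x y z hx hy, map_smul, map_smul]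
  · intro a b c x y z hx hy hz
    have h := congrArg (fun t => β (β t)) (B.sb3 a b c x y z hx hy hz)
    simp only [map_add, map_smul, map_zero] at h
    simpa only [htp'app] using h
  · intro a b c d x y u v hx hy hu hv
    have h := congrArg (fun t => β (β (β t))) (B.sb4 a b c d x y u v hx hy hu hv)
    simp only [map_add, map_smul, map_sub] at h
    simp only [htp'app, hbr'app, ← hβtp, ← hβbr]
    exact h
  · intro a b c d x y u v w hx hy hu hv
    have h := congrArg (fun t => β (β (β (β t)))) (B.sb5 a b c d x y u v w hx hy hu hv)
    simp only [map_add, map_smul] at h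
    simp only [htp'app, ← hβtp]
    exact h

end SuperAlg
end
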